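/- arXiv:2412.15551 — 4 statements merged into one kernel-verified Lean document; each statement's English description precedes it below -/
import Mathlib

section
/- Let G be a finite group of order n and v ∈ F_q[G]. Then G is isomorphic to a subgroup of the permutation automorphism group PAut(C(v)) of the code C(v) generated by the rows of the G-matrix σ_G(v). In particular, |PAut(C(v))| is a multiple of n. -/
/-!
Left multiplication by `h` sends the row of σ_G(v) indexed by `g` to the row indexed by `h⁻¹ g`,
so it permutes the generators of `C(v)` and hence preserves the code. The permutations preserving
a code form a subgroup of the finite group `Perm G` (a submonoid of a finite group is closed under
inverses), and the regular representation `G → Perm G` is injective, so Lagrange's theorem gives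
`|G| ∣ |PAut(C(v))|`.
-/

namespace Submodule

variable {R ι : Type*} [Semiring R]

/-- The permutation automorphism group `PAut(C)` of a code `C ⊆ R^ι`. -/
def permAut [Finite ι] (C : Submodule R (ι → R)) : Subgroup (Equiv.Perm ι) :=
  let S : Submonoid (Equiv.Perm ι) :=
    { carrier := {π | ∀ c ∈ C, c ∘ π ∈ C}
      one_mem' := fun _ hc => hc
      mul_mem' := fun hπ hσ c hc => hσ _ (hπ c hc) }
  { S with
    inv_mem' := fun {π} hπ =>
      Submonoid.powers_le.mpr hπ <|
        mem_powers_iff_mem_zpowers.mpr (Subgroup.inv_mem _ (Subgroup.mem_zpowers π)) }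

theorem comp_mem_span_of_forall_comp_mem {S : Set (ι → R)} {f : ι → ι}
    (hS : ∀ s ∈ S, s ∘ f ∈ span R S) {c : ι → R} (hc : c ∈ span R S) : c ∘ f ∈ span R S :=
  (span_le (p := (span R S).comap (LinearMap.funLeft R R f))).mpr hS hc

end Submodule

namespace MonoidAlgebra

variable {R G : Type*} [Semiring R] [Group G]

/-- The code `C(v)` spanned by the rows of the G-matrix σ_G(v). -/
def rowCode (v : MonoidAlgebra R G) : Submodule R (G → R) :=
  Submodule.span R (Set.range fun g : G => fun h : G => v.coeff (g⁻¹ * h))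

theorem toPerm_mem_permAut_rowCode [Finite G] (v : MonoidAlgebra R G) (h : G) :
    MulAction.toPerm h ∈ v.rowCode.permAut := by
  refine fun c hc => Submodule.comp_mem_span_of_forall_comp_mem ?_ hc
  rintro _ ⟨g, rfl⟩
  refine Submodule.subset_span ⟨h⁻¹ * g, funext fun i => ?_⟩
  simp [mul_assoc]

end MonoidAlgebra

theorem group_embeds_in_paut_general (F : Type*) [Field F] (G : Type*) [Group G]
    [Fintype G] (v : MonoidAlgebra F G)
    (C : Submodule F (G → F))
    (hC : C = Submodule.span F (Set.range fun g : G => fun h : G => v.coeff (g⁻¹ * h))) :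
    (∃ φ : G →* Equiv.Perm G, Function.Injective φ ∧
        ∀ h : G, ∀ c ∈ C, (fun i => c (φ h i)) ∈ C) ∧
      ∃ m : ℕ, Nat.card {π : Equiv.Perm G // ∀ c ∈ C, (fun i => c (π i)) ∈ C} =
        Fintype.card G * m := by
  obtain rfl : C = v.rowCode := hC
  have hinj : Function.Injective (MulAction.toPermHom G G) := MulAction.toPerm_injective
  have hle : (MulAction.toPermHom G G).range ≤ v.rowCode.permAut := by
    rintro _ ⟨h, rfl⟩
    exact v.toPerm_mem_permAut_rowCode h
  refine ⟨⟨_, hinj, v.toPerm_mem_permAut_rowCode⟩, ?_⟩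
  have hdvd := Subgroup.card_dvd_of_le hle
  rw [← Nat.card_congr (MonoidHom.ofInjective hinj).toEquiv, Nat.card_eq_fintype_card] at hdvd
  exact hdvd

/-- `G` is isomorphic to a subgroup of the permutation automorphism group of the code `C(v)`
generated by the rows of σ_G(v) (the row indexed by `g` being `h ↦ v (g⁻¹ * h)`); in
particular `|PAut(C(v))|` is a multiple of `|G|`. -/
theorem group_embeds_in_paut (F : Type*) [Field F] [Fintype F] (G : Type*) [Group G]
    [Fintype G] [DecidableEq G] (v : MonoidAlgebra F G)
    (C : Submodule F (G → F))
    (hC : C = Submodule.span F (Set.range fun g : G => fun h : G => v.coeff (g⁻¹ * h))) :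
    (∃ φ : G →* Equiv.Perm G, Function.Injective φ ∧
        ∀ h : G, ∀ c ∈ C, (fun i => c (φ h i)) ∈ C) ∧
      ∃ m : ℕ, Nat.card {π : Equiv.Perm G // ∀ c ∈ C, (fun i => c (π i)) ∈ C} =
        Fintype.card G * m :=
  group_embeds_in_paut_general F G v C hC
end

section
/- Let C be a binary linear code of length n and π ∈ PAut(C) an automorphism of type p-(c,f), where p is odd. Define F_π(C) = {c ∈ C : π(c) = c} and E_π(C) = {c ∈ C : the sum of the coordinates of c over each cycle and each fixed point of π is 0 in F_2}. Then C = F_π(C) ⊕ E_π(C) (internal direct sum), and both F_π(C) and E_π(C) are π-invariant. -/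
open Finset Equiv Equiv.Perm

private lemma odd_smul_zmod2 {m : ℕ} (hm : Odd m) (x : ZMod 2) : m • x = x := by
  have h2 : (m : ZMod 2) = 1 := by
    rw [← ZMod.natCast_mod m 2, Nat.odd_iff.mp hm, Nat.cast_one]
  rw [nsmul_eq_mul, h2, one_mul]

/-- Huffman's decomposition: if `π` is an automorphism of a binary linear code `C` of
type p-(c,f) with `p` odd, then `C = F_π(C) ⊕ E_π(C)` (every codeword is uniquely the
sum of an element of `F_π(C)` and an element of `E_π(C)`), and both subcodes are
π-invariant.  Here `F_π(C)` is the set of codewords fixed by `π` and `E_π(C)` the set of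
codewords whose coordinate sum over every orbit of `π` vanishes. -/
theorem huffman_decomposition (n p c f : ℕ) (hp : Odd p)
    (C : Submodule (ZMod 2) (Fin n → ZMod 2)) (π : Equiv.Perm (Fin n))
    (hPAut : ∀ v ∈ C, (fun i => v (π i)) ∈ C)
    (htype : π.cycleType = Multiset.replicate c p ∧
      (Finset.univ.filter (fun i => π i = i)).card = f)
    (Fπ Eπ : Set (Fin n → ZMod 2))
    (hF : Fπ = {v | v ∈ C ∧ ∀ i, v (π i) = v i})
    (hE : Eπ = {v | v ∈ C ∧ ∀ j : Fin n,
      ∑ i ∈ Finset.univ.filter (fun i => π.SameCycle j i), v i = 0}) :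
    (∀ v ∈ C, ∃! fe : (Fin n → ZMod 2) × (Fin n → ZMod 2),
        fe.1 ∈ Fπ ∧ fe.2 ∈ Eπ ∧ v = fe.1 + fe.2) ∧
      (∀ v ∈ Fπ, (fun i => v (π i)) ∈ Fπ) ∧
      (∀ v ∈ Eπ, (fun i => v (π i)) ∈ Eπ) := by
  obtain ⟨hct, -⟩ := htype
  subst hF; subst hE
  have hp0 : 0 < p := hp.pos
  -- π ^ p = 1
  have hord : orderOf π ∣ p := by
    rw [← Equiv.Perm.lcm_cycleType, hct]
    exact Multiset.lcm_dvd.mpr fun a ha => (Multiset.eq_of_mem_replicate ha) ▸ dvd_rfl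
  have hπp : π ^ p = 1 := orderOf_dvd_iff_pow_eq_one.mp hord
  -- orbits of fixed points are singletons
  have hΩfix : ∀ j : Fin n, π j = j →
      Finset.univ.filter (fun i => π.SameCycle j i) = {j} := by
    intro j hj
    ext i
    simp only [mem_filter, mem_univ, true_and, mem_singleton]
    constructor
    · rintro ⟨z, hz⟩
      rw [← hz, zpow_apply_eq_self_of_apply_eq_self hj]
    · rintro rfl; exact Equiv.Perm.SameCycle.refl _ _
  -- orbits of moved points are cycle supports
  have hΩmov : ∀ j : Fin n, π j ≠ j →
      Finset.univ.filter (fun i => π.SameCycle j i) = (π.cycleOf j).support := by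
    intro j hj
    ext i
    simp only [mem_filter, mem_univ, true_and, Equiv.Perm.mem_support_cycleOf_iff]
    exact ⟨fun h => ⟨h, Equiv.Perm.mem_support.mpr hj⟩, fun h => h.1⟩
  have hcardm : ∀ j : Fin n, π j ≠ j → (π.cycleOf j).support.card = p := by
    intro j hj
    have hmem : (π.cycleOf j).support.card ∈ π.cycleType := by
      rw [Equiv.Perm.cycleType_def]
      exact Multiset.mem_map_of_mem _
        (by rwa [← Finset.mem_def, Equiv.Perm.cycleOf_mem_cycleFactorsFinset_iff,
          Equiv.Perm.mem_support])
    rw [hct] at hmem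
    exact Multiset.eq_of_mem_replicate hmem
  have hcardodd : ∀ j : Fin n,
      Odd (Finset.univ.filter (fun i => π.SameCycle j i)).card := by
    intro j
    by_cases hj : π j = j
    · rw [hΩfix j hj, Finset.card_singleton]; exact odd_one
    · rw [hΩmov j hj, hcardm j hj]; exact hp
  -- orbit sums equal sums over `range p`
  have hsum : ∀ (u : Fin n → ZMod 2) (j : Fin n),
      ∑ i ∈ Finset.univ.filter (fun i => π.SameCycle j i), u i
        = ∑ k ∈ Finset.range p, u ((π ^ k) j) := by
    intro u j
    by_cases hj : π j = j
    · rw [hΩfix j hj, Finset.sum_singleton]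
      have hterm : ∀ k ∈ Finset.range p, u ((π ^ k) j) = u j := fun k _ => by
        rw [pow_apply_eq_self_of_apply_eq_self hj]
      rw [Finset.sum_congr rfl hterm, Finset.sum_const, Finset.card_range,
        odd_smul_zmod2 hp]
    · have hjs : j ∈ π.support := Equiv.Perm.mem_support.mpr hj
      have hcyc := π.isCycleOn_support_cycleOf j
      have hjmem : j ∈ (π.cycleOf j).support :=
        Equiv.Perm.mem_support_cycleOf_iff.mpr ⟨Equiv.Perm.SameCycle.refl _ _, hjs⟩
      symm
      refine Finset.sum_bij (fun (k : ℕ) (_ : k ∈ Finset.range p) => (π ^ k) j)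
        ?_ ?_ ?_ ?_
      · intro k hk
        simp only [mem_filter, mem_univ, true_and]
        exact ⟨(k : ℤ), by simp [zpow_natCast]⟩
      · intro k1 h1 k2 h2 heq
        have hmod := (hcyc.pow_apply_eq_pow_apply hjmem).mp heq
        rw [hcardm j hj] at hmod
        have h3 : k1 % p = k2 % p := hmod
        rwa [Nat.mod_eq_of_lt (Finset.mem_range.mp h1),
          Nat.mod_eq_of_lt (Finset.mem_range.mp h2)] at h3
      · intro i hi
        simp only [mem_filter, mem_univ, true_and] at hi
        obtain ⟨k, hk, hk'⟩ := hi.exists_pow_eq_of_mem_support hjs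
        rw [hcardm j hj] at hk
        exact ⟨k, Finset.mem_range.mpr hk, hk'⟩
      · intro k hk; rfl
  -- shift invariance of the averaged word
  have hshift : ∀ (u : Fin n → ZMod 2) (j : Fin n),
      ∑ k ∈ Finset.range p, u ((π ^ k) (π j)) = ∑ k ∈ Finset.range p, u ((π ^ k) j) := by
    intro u j
    have h1 : ∀ k : ℕ, (π ^ k) (π j) = (π ^ (k + 1)) j := fun k => by
      rw [pow_succ, Equiv.Perm.mul_apply]
    rw [Finset.sum_congr rfl fun k _ => by rw [h1]]
    have h2 := Finset.sum_range_succ' (fun k => u ((π ^ k) j)) p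
    have h3 := Finset.sum_range_succ (fun k => u ((π ^ k) j)) p
    have h4 : (∑ k ∈ Finset.range p, u ((π ^ (k + 1)) j)) + u ((π ^ 0) j)
        = (∑ k ∈ Finset.range p, u ((π ^ k) j)) + u ((π ^ p) j) := h2.symm.trans h3
    have h5 : (π ^ 0 : Equiv.Perm (Fin n)) j = (π ^ p) j := by rw [pow_zero, hπp]
    rw [h5] at h4
    exact add_right_cancel h4
  -- orbits depend only on the cycle
  have hΩeq : ∀ {j j' : Fin n}, π.SameCycle j j' →
      Finset.univ.filter (fun i => π.SameCycle j i)
        = Finset.univ.filter (fun i => π.SameCycle j' i) := by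
    intro j j' h
    ext i
    simp only [mem_filter, mem_univ, true_and]
    exact ⟨fun h' => h.symm.trans h', fun h' => h.trans h'⟩
  -- zero lemma : fixed + zero orbit sums ⇒ zero
  have hzero : ∀ u : Fin n → ZMod 2, (∀ i, u (π i) = u i) →
      (∀ j, ∑ i ∈ Finset.univ.filter (fun i => π.SameCycle j i), u i = 0) → u = 0 := by
    intro u hu hO
    have hupow : ∀ (k : ℕ) (j : Fin n), u ((π ^ k) j) = u j := by
      intro k j
      induction k with
      | zero => simp
      | succ k ih => rw [pow_succ', Equiv.Perm.mul_apply, hu, ih]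
    funext j
    have h1 := hO j
    rw [hsum u j, Finset.sum_congr rfl (fun k _ => hupow k j), Finset.sum_const,
      Finset.card_range, odd_smul_zmod2 hp] at h1
    exact h1
  refine ⟨?_, ?_, ?_⟩
  · -- direct sum decomposition
    intro v hv
    set w : Fin n → ZMod 2 := fun j => ∑ k ∈ Finset.range p, v ((π ^ k) j) with hwdef
    have hpowC : ∀ k : ℕ, (fun i => v ((π ^ k) i)) ∈ C := by
      intro k
      induction k with
      | zero => simpa using hv
      | succ k ih =>
        have he : (fun i => v ((π ^ (k + 1)) i)) = fun i => v ((π ^ k) (π i)) := by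
          funext i; rw [pow_succ, Equiv.Perm.mul_apply]
        rw [he]
        exact hPAut _ ih
    have hwC : w ∈ C := by
      have hw2 : w = ∑ k ∈ Finset.range p, (fun i => v ((π ^ k) i)) := by
        funext j; rw [Finset.sum_apply]
      rw [hw2]
      exact Submodule.sum_mem C fun k _ => hpowC k
    have hwfix : ∀ i, w (π i) = w i := fun i => hshift v i
    have hwconst : ∀ j i, π.SameCycle j i → w i = w j := by
      intro j i hsc
      simp only [hwdef]
      rw [← hsum v i, ← hsum v j, hΩeq hsc.symm]
    have hwF : w ∈ {v | v ∈ C ∧ ∀ i, v (π i) = v i} := ⟨hwC, hwfix⟩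
    have heE : v - w ∈ {v | v ∈ C ∧ ∀ j : Fin n,
        ∑ i ∈ Finset.univ.filter (fun i => π.SameCycle j i), v i = 0} := by
      refine ⟨Submodule.sub_mem C hv hwC, fun j => ?_⟩
      have hconstsum : ∑ i ∈ Finset.univ.filter (fun i => π.SameCycle j i), w i
          = (Finset.univ.filter (fun i => π.SameCycle j i)).card • w j := by
        rw [Finset.sum_congr rfl
          (fun i hi => hwconst j i (Finset.mem_filter.mp hi).2), Finset.sum_const]
      have : ∑ i ∈ Finset.univ.filter (fun i => π.SameCycle j i), (v - w) i
          = (∑ i ∈ Finset.univ.filter (fun i => π.SameCycle j i), v i)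
            - ∑ i ∈ Finset.univ.filter (fun i => π.SameCycle j i), w i := by
        simp only [Pi.sub_apply]
        rw [Finset.sum_sub_distrib]
      rw [this, hconstsum, odd_smul_zmod2 (hcardodd j), hsum v j, hwdef, sub_self]
    refine ⟨(w, v - w), ⟨hwF, heE, by ring⟩, ?_⟩
    rintro ⟨f2, e2⟩ ⟨hf2, he2, hveq⟩
    have hf2fix : ∀ i, f2 (π i) = f2 i := hf2.2
    have he2sum : ∀ j : Fin n,
        ∑ i ∈ Finset.univ.filter (fun i => π.SameCycle j i), e2 i = 0 := he2.2
    have hveq' : v = f2 + e2 := hveq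
    have hdiff : f2 - w = 0 := by
      apply hzero
      · intro i
        simp only [Pi.sub_apply, hf2fix i, hwfix i]
      · intro j
        have key : f2 - w = (v - w) - e2 := by rw [hveq']; ring
        rw [key]
        have : ∑ i ∈ Finset.univ.filter (fun i => π.SameCycle j i), ((v - w) - e2) i
            = (∑ i ∈ Finset.univ.filter (fun i => π.SameCycle j i), (v - w) i)
              - ∑ i ∈ Finset.univ.filter (fun i => π.SameCycle j i), e2 i := by
          simp only [Pi.sub_apply]
          rw [Finset.sum_sub_distrib]
        rw [this, heE.2 j, he2sum j, sub_zero]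
    have hf2w : f2 = w := sub_eq_zero.mp hdiff
    have he2w : e2 = v - w := by rw [hveq', hf2w]; ring
    simp only [Prod.mk.injEq]
    exact ⟨hf2w, he2w⟩
  · -- F is π-invariant
    rintro v ⟨hvC, hvfix⟩
    have hvv : (fun i => v (π i)) = v := funext hvfix
    rw [hvv]
    exact ⟨hvC, hvfix⟩
  · -- E is π-invariant
    rintro v ⟨hvC, hvsum⟩
    refine ⟨hPAut v hvC, fun j => ?_⟩
    have hmemiff : ∀ i : Fin n, π.SameCycle j i ↔ π.SameCycle j (π i) := by
      intro i
      constructor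
      · intro h
        exact h.trans ⟨1, by simp⟩
      · intro h
        exact h.trans ⟨-1, by simp⟩
    have hbij : ∑ i ∈ Finset.univ.filter (fun i => π.SameCycle j i), v (π i)
        = ∑ i ∈ Finset.univ.filter (fun i => π.SameCycle j i), v i := by
      refine Finset.sum_nbij' (fun a => π a) (fun a => π⁻¹ a) ?_ ?_ ?_ ?_ ?_
      · intro a ha
        simp only [mem_filter, mem_univ, true_and] at ha ⊢
        exact (hmemiff a).mp ha
      · intro a ha
        simp only [mem_filter, mem_univ, true_and] at ha ⊢
        exact (hmemiff (π⁻¹ a)).mpr (by simpa using ha)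
      · intro a _; simp
      · intro a _; simp
      · intro a _; rfl
    exact hbij.trans (hvsum j)
end

section
/- Let C be a binary [n,k,d] linear code with d odd, admitting an automorphism π of type p-(c,0) with p odd, and let C = F_π(C) ⊕ E_π(C) be the corresponding decomposition. Then every nonzero codeword of F_π(C) has weight a multiple of p, and every minimum-weight codeword of C of odd weight d lies outside E_π(C). Consequently, if p does not divide d, then the minimum distance of F_π(C) is not equal to d. Moreover, since the weights in E_π(C) are even, any codeword of C of odd weight d has nonzero component in F_π(C) in the decomposition C = F_π(C) ⊕ E_π(C). -/
open Finset

section Helpers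

variable {n : ℕ} (π : Equiv.Perm (Fin n))

noncomputable def myOrb (j : Fin n) : Finset (Fin n) :=
  Finset.univ.filter (fun i => π.SameCycle j i)

lemma mem_myOrb {j i : Fin n} : i ∈ myOrb π j ↔ π.SameCycle j i := by
  simp [myOrb]

lemma myOrb_eq_of_sameCycle {j k : Fin n} (h : π.SameCycle j k) :
    myOrb π j = myOrb π k := by
  ext i; simp only [mem_myOrb]
  exact ⟨fun h' => (h.symm).trans h', fun h' => h.trans h'⟩

lemma myOrb_eq_iff {i j : Fin n} : myOrb π i = myOrb π j ↔ π.SameCycle j i := by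
  constructor
  · intro h
    have : i ∈ myOrb π j := h ▸ (mem_myOrb π).2 (Equiv.Perm.SameCycle.refl π i)
    exact (mem_myOrb π).1 this
  · intro h; exact (myOrb_eq_of_sameCycle π h.symm)

lemma card_myOrb (hnofix : ∀ i, π i ≠ i) (htype : π.cycleType = Multiset.replicate c p)
    (j : Fin n) : (myOrb π j).card = p := by
  have hjs : j ∈ π.support := Equiv.Perm.mem_support.2 (hnofix j)
  have horb : myOrb π j = (π.cycleOf j).support := by
    ext i
    rw [mem_myOrb, Equiv.Perm.mem_support_cycleOf_iff]
    simp [hjs]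
  have hmem : (π.cycleOf j).support.card ∈ π.cycleType := by
    rw [Equiv.Perm.cycleType_def]
    exact Multiset.mem_map_of_mem _
      (Equiv.Perm.cycleOf_mem_cycleFactorsFinset_iff.2 hjs)
  rw [horb]
  exact Multiset.eq_of_mem_replicate (htype ▸ hmem)

/-- key counting : the support of `v` decomposes into fibers of the orbit map. -/
lemma card_support_eq_sum (T : Finset (Fin n)) :
    T.card = ∑ B ∈ T.image (myOrb π), (T.filter (fun i => myOrb π i = B)).card :=
  Finset.card_eq_sum_card_image (myOrb π) T

lemma fiber_eq_inter {T : Finset (Fin n)} {j : Fin n} :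
    T.filter (fun i => myOrb π i = myOrb π j) = T.filter (fun i => π.SameCycle j i) := by
  ext i; simp [myOrb_eq_iff]

/-- if all cycle sums of `v` vanish, the weight of `v` is even. -/
lemma even_weight_of_cycle_sums_zero (v : Fin n → ZMod 2)
    (hsum : ∀ j : Fin n, ∑ i ∈ Finset.univ.filter (fun i => π.SameCycle j i), v i = 0) :
    Even (Finset.univ.filter (fun i => v i ≠ 0)).card := by
  set T := Finset.univ.filter (fun i => v i ≠ 0) with hT
  rw [card_support_eq_sum π T]
  apply Finset.even_sum
  intro B hB
  obtain ⟨j, hjT, rfl⟩ := Finset.mem_image.1 hB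
  rw [fiber_eq_inter]
  -- cycle sum over orbit of j equals card of support in orbit, mod 2
  have h1 : ∀ a : ZMod 2, a ≠ 0 → a = 1 := by decide
  have hsum' := hsum j
  have : ∑ i ∈ Finset.univ.filter (fun i => π.SameCycle j i), v i
      = ((T.filter (fun i => π.SameCycle j i)).card : ZMod 2) := by
    rw [show T.filter (fun i => π.SameCycle j i)
        = (Finset.univ.filter (fun i => π.SameCycle j i)).filter (fun i => v i ≠ 0) by
      ext i; simp [hT]; tauto]
    rw [← Finset.sum_filter_ne_zero]
    rw [Finset.sum_congr rfl (fun i hi => h1 _ (Finset.mem_filter.1 hi).2)]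
    simp
  rw [this] at hsum'
  obtain ⟨k, hk⟩ := (ZMod.natCast_eq_zero_iff _ 2).1 hsum'
  exact ⟨k, by omega⟩

/-- fixed codewords have weight divisible by p -/
lemma p_dvd_weight_of_fixed {c p : ℕ} (hnofix : ∀ i, π i ≠ i)
    (htype : π.cycleType = Multiset.replicate c p)
    (v : Fin n → ZMod 2) (hfix : ∀ i, v (π i) = v i) :
    p ∣ (Finset.univ.filter (fun i => v i ≠ 0)).card := by
  set T := Finset.univ.filter (fun i => v i ≠ 0) with hT
  -- T is closed under SameCycle
  have hzfix : ∀ (k : ℤ) (i : Fin n), v ((π ^ k) i) = v i := by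
    have hinv : ∀ i, v (π⁻¹ i) = v i := by
      intro i
      conv_rhs => rw [show i = π (π⁻¹ i) by simp]
      rw [hfix]
    intro k
    induction k using Int.induction_on with
    | zero => simp
    | succ k ih =>
        intro i
        have : (π ^ ((k : ℤ) + 1)) i = (π ^ (k : ℤ)) (π i) := by
          rw [zpow_add_one, Equiv.Perm.mul_apply]
        rw [this, ih, hfix]
    | pred k ih =>
        intro i
        have : (π ^ (-(k : ℤ) - 1)) i = (π ^ (-(k : ℤ))) (π⁻¹ i) := by
          rw [zpow_sub_one, Equiv.Perm.mul_apply]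
        rw [this, ih, hinv]
  have hclosed : ∀ {j i : Fin n}, j ∈ T → π.SameCycle j i → i ∈ T := by
    intro j i hj ⟨k, hk⟩
    simp only [hT, Finset.mem_filter, Finset.mem_univ, true_and] at hj ⊢
    rw [← hk, hzfix]; exact hj
  rw [card_support_eq_sum π T]
  apply Finset.dvd_sum
  intro B hB
  obtain ⟨j, hjT, rfl⟩ := Finset.mem_image.1 hB
  rw [fiber_eq_inter]
  have : T.filter (fun i => π.SameCycle j i) = myOrb π j := by
    ext i
    simp only [Finset.mem_filter, mem_myOrb]
    exact ⟨fun h => h.2, fun h => ⟨hclosed hjT h, h⟩⟩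
  rw [this, card_myOrb π hnofix htype]

end Helpers

/-- Let `C` be a binary [n,k,d] code with `d` odd, with an automorphism `π` of type
p-(c,0), `p` odd.  Then: every codeword of the fixed subcode `F_π(C)` has weight a multiple
of `p` (so if `p ∤ d` no codeword of `F_π(C)` has weight `d`); every codeword of `C` of
weight `d` lies outside `E_π(C)`; and in any decomposition `v = f + e` of such a codeword
with `f ∈ F_π(C)` and `e ∈ E_π(C)`, the component `f` is nonzero. -/
theorem min_weight_codeword_outside_E (n p c d : ℕ) (hd : Odd d) (hp : Odd p)
    (C : Submodule (ZMod 2) (Fin n → ZMod 2)) (π : Equiv.Perm (Fin n))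
    (hPAut : ∀ v ∈ C, (fun i => v (π i)) ∈ C)
    (htype : π.cycleType = Multiset.replicate c p)
    (hnofix : ∀ i, π i ≠ i)
    (hdist : (∀ v ∈ C, v ≠ 0 → d ≤ (Finset.univ.filter (fun i => v i ≠ 0)).card) ∧
      ∃ v ∈ C, v ≠ 0 ∧ (Finset.univ.filter (fun i => v i ≠ 0)).card = d) :
    (∀ v ∈ C, (∀ i, v (π i) = v i) →
        p ∣ (Finset.univ.filter (fun i => v i ≠ 0)).card) ∧
    (¬ p ∣ d → ∀ v ∈ C, (∀ i, v (π i) = v i) →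
        (Finset.univ.filter (fun i => v i ≠ 0)).card ≠ d) ∧
    ∀ v ∈ C, (Finset.univ.filter (fun i => v i ≠ 0)).card = d →
      (¬ ∀ j : Fin n, ∑ i ∈ Finset.univ.filter (fun i => π.SameCycle j i), v i = 0) ∧
      ∀ f e : Fin n → ZMod 2, f ∈ C → (∀ i, f (π i) = f i) → e ∈ C →
        (∀ j : Fin n, ∑ i ∈ Finset.univ.filter (fun i => π.SameCycle j i), e i = 0) →
        v = f + e → f ≠ 0 := by
  refine ⟨fun v _ hfix => p_dvd_weight_of_fixed π hnofix htype v hfix, ?_, ?_⟩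
  · intro hnd v hv hfix heq
    exact hnd (heq ▸ p_dvd_weight_of_fixed π hnofix htype v hfix)
  · intro v hv hwt
    constructor
    · intro hall
      have := even_weight_of_cycle_sums_zero π v hall
      rw [hwt] at this
      exact (Nat.not_even_iff_odd.2 hd) this
    · intro f e hfC hffix heC hesum hvfe hf0
      have hve : v = e := by rw [hvfe, hf0, zero_add]
      have := even_weight_of_cycle_sums_zero π e hesum
      rw [← hve, hwt] at this
      exact (Nat.not_even_iff_odd.2 hd) this
end

section
/- Let G₁ = C_n ⋊ C_m = ⟨x,y | x^m = y^n = 1, y^x = y^k⟩ with k^m ≡ 1 mod n, and order the group elements as x^j y^i ↔ coordinate 1 + i + nj (0 ≤ i < n, 0 ≤ j < m). If (b_1,...,b_{mn}) ∈ C(v) for v ∈ F_q[G₁], then the vector obtained by cyclically shifting the j-th block (b_{1+nj},...,b_{n+nj}) by k^j mod n positions for each j = 0,...,m−1 also lies in C(v); and the vector obtained by cyclically shifting the m blocks of length n among themselves by one position also lies in C(v). -/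
/-!
`C(v)`, the span of the left translates `g v`, is a left ideal of `F[G]`, so it contains `y w` and
`x w` for every codeword `w`. Since `y x^j = x^j y^(k^j)`, the coefficient of `y w` at `x^j y^i` is
that of `w` at `x^j y^(i - k^j)`, and the coefficient of `x w` at `x^j y^i` is that of `w` at
`x^(j-1) y^i`: these are exactly the two shifted vectors.
-/

open MonoidAlgebra Submodule

theorem MonoidAlgebra.single_one_mul_mem_span_range_single_one_mul {k G : Type*} [CommSemiring k]
    [Monoid G] (v : MonoidAlgebra k G) (g : G) {u : MonoidAlgebra k G}
    (hu : u ∈ span k (Set.range fun h : G => single h (1 : k) * v)) :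
    single g (1 : k) * u ∈ span k (Set.range fun h : G => single h (1 : k) * v) := by
  induction hu using Submodule.span_induction with
  | mem _ hmem =>
    obtain ⟨h, rfl⟩ := hmem
    exact subset_span ⟨g * h, by rw [← mul_assoc, single_mul_single, one_mul]⟩
  | zero => simp
  | add _ _ _ _ ha hb => rw [mul_add]; exact add_mem ha hb
  | smul r _ _ hu => rw [mul_smul_comm]; exact smul_mem _ r hu

theorem SemiconjBy.pow_left_pow {M : Type*} [Monoid M] {x y : M} {k : ℕ}
    (h : SemiconjBy x (y ^ k) y) (j : ℕ) : SemiconjBy (x ^ j) (y ^ k ^ j) y := by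
  induction j with
  | zero => simp
  | succ j ih =>
    rw [pow_succ x, pow_succ' k, pow_mul]
    exact ih.mul_left (h.pow_right _)

theorem pow_eq_pow_of_natCast_eq {M : Type*} [Monoid M] {y : M} {n a b : ℕ} (hy : y ^ n = 1)
    (hab : (a : ZMod n) = b) : y ^ a = y ^ b := by
  rw [ZMod.natCast_eq_natCast_iff] at hab
  rw [pow_eq_pow_mod a hy, pow_eq_pow_mod b hy, hab]

theorem codewords_of_semidirect_product_general (F : Type*) [Field F]
    (G : Type*) [Group G]
    (m n k : ℕ) [NeZero m] [NeZero n] (x y : G)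
    (hx : x ^ m = 1) (hy : y ^ n = 1) (hconj : x⁻¹ * y * x = y ^ k)
    (v w : MonoidAlgebra F G)
    (hw : w ∈ Submodule.span F (Set.range fun g : G => MonoidAlgebra.single g (1 : F) * v)) :
    (∃ w₁ ∈ Submodule.span F (Set.range fun g : G => MonoidAlgebra.single g (1 : F) * v),
        ∀ (j : ZMod m) (i : ZMod n),
          w₁.coeff (x ^ j.val * y ^ i.val) = w.coeff (x ^ j.val * y ^ (i - (k : ZMod n) ^ j.val).val)) ∧
      ∃ w₂ ∈ Submodule.span F (Set.range fun g : G => MonoidAlgebra.single g (1 : F) * v),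
        ∀ (j : ZMod m) (i : ZMod n),
          w₂.coeff (x ^ j.val * y ^ i.val) = w.coeff (x ^ (j - 1).val * y ^ i.val) := by
  have hyx : SemiconjBy x (y ^ k) y := by
    rw [SemiconjBy, ← hconj]; group
  refine ⟨⟨single y 1 * w, single_one_mul_mem_span_range_single_one_mul v y hw, fun j i => ?_⟩,
    ⟨single x 1 * w, single_one_mul_mem_span_range_single_one_mul v x hw, fun j i => ?_⟩⟩ <;>
    (rw [coeff_single_mul_apply, one_mul]; congr 1; rw [inv_mul_eq_iff_eq_mul])
  · rw [← mul_assoc, ← (hyx.pow_left_pow j.val).eq, mul_assoc, ← pow_add]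
    refine congrArg _ (pow_eq_pow_of_natCast_eq hy ?_)
    push_cast [ZMod.natCast_val, ZMod.cast_id]
    ring
  · rw [← mul_assoc, ← pow_succ']
    refine congrArg (· * y ^ i.val) (pow_eq_pow_of_natCast_eq hx ?_)
    push_cast [ZMod.natCast_val, ZMod.cast_id]
    ring

/-- Theorem 3.1: for the group `G₁ = C_n ⋊ C_m = ⟨x,y | x^m = y^n = 1, x⁻¹yx = y^k⟩` (whose
`mn` elements are the `x^j y^i`), if a codeword of `C(v)` has blocks `b_j = (coefficients at
x^j y^i, 0 ≤ i < n)`, then the vector whose j-th block is the cyclic shift of `b_j` by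
`k^j mod n` positions is again a codeword, as is the vector whose blocks are the `b_j`
cyclically shifted among themselves by one position. -/
theorem codewords_of_semidirect_product (F : Type*) [Field F] [Fintype F]
    (G : Type*) [Group G] [Fintype G] [DecidableEq G]
    (m n k : ℕ) [NeZero m] [NeZero n] (x y : G)
    (hx : x ^ m = 1) (hy : y ^ n = 1) (hconj : x⁻¹ * y * x = y ^ k)
    (hk : k ^ m ≡ 1 [MOD n])
    (hbij : Function.Bijective fun p : ZMod m × ZMod n => x ^ p.1.val * y ^ p.2.val)
    (v w : MonoidAlgebra F G)
    (hw : w ∈ Submodule.span F (Set.range fun g : G => MonoidAlgebra.single g (1 : F) * v)) :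
    (∃ w₁ ∈ Submodule.span F (Set.range fun g : G => MonoidAlgebra.single g (1 : F) * v),
        ∀ (j : ZMod m) (i : ZMod n),
          w₁.coeff (x ^ j.val * y ^ i.val) = w.coeff (x ^ j.val * y ^ (i - (k : ZMod n) ^ j.val).val)) ∧
      ∃ w₂ ∈ Submodule.span F (Set.range fun g : G => MonoidAlgebra.single g (1 : F) * v),
        ∀ (j : ZMod m) (i : ZMod n),
          w₂.coeff (x ^ j.val * y ^ i.val) = w.coeff (x ^ (j - 1).val * y ^ i.val) :=
  codewords_of_semidirect_product_general F G m n k x y hx hy hconj v w hw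
end
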